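/- arXiv:2408.00910 — 2 statements merged into one kernel-verified Lean document; each statement's English description precedes it below -/
import Mathlib

section
/- Let G be a finite non-nilpotent group and H a finite nilpotent group. Then |H| divides the number of vertices of each connected component of the nilpotent graph of G × H. -/
def nilpotentizer (G : Type*) [Group G] : Set G :=
  {g | ∀ h : G, Group.IsNilpotent (Subgroup.closure ({g, h} : Set G))}

def nilpotentizerOf {G : Type*} [Group G] (x : G) : Set G :=
  {g | Group.IsNilpotent (Subgroup.closure ({g, x} : Set G))}

def nilpotentGraph (G : Type*) [Group G] :
    SimpleGraph {x : G // x ∉ nilpotentizer G} where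
  Adj a b := a ≠ b ∧ Group.IsNilpotent (Subgroup.closure ({(a : G), (b : G)} : Set G))
  symm := ⟨fun a b ⟨hne, h⟩ => ⟨fun e => hne e.symm, by rwa [Set.pair_comm]⟩⟩
  loopless := ⟨fun a ⟨h, _⟩ => h rfl⟩

noncomputable def hypercenter (G : Type*) [Group G] : Subgroup G := Subgroup.upperCentralSeries G (Nat.card G)

instance {G : Type*} [Group G] : (hypercenter G).Normal := by
  unfold hypercenter; infer_instance

/-!
Since `H` is nilpotent, a subgroup of `G × H` generated by a set `s` is nilpotent exactly when
its projection to `G` is: it sits inside `⟨fst '' s⟩ × H`. So whether `(g, h)` is a vertex, and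
which vertices it is adjacent to, depends only on `g`; in particular all vertices with the same
first coordinate are pairwise adjacent. The support of a component is therefore `T ×ˢ univ` for
some `T ⊆ G`, and its size is `|T| · |H|`.
-/

open Subgroup SimpleGraph

section
variable {G H : Type*} [Group G] [Group H] [Group.IsNilpotent H]

lemma isNilpotent_closure_prod_iff (s : Set (G × H)) :
    Group.IsNilpotent (closure s) ↔ Group.IsNilpotent (closure (Prod.fst '' s)) := by
  constructor
  · intro _
    have hmap : (closure s).map (MonoidHom.fst G H) = closure (Prod.fst '' s) :=
      MonoidHom.map_closure _ s
    rw [← hmap]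
    exact Group.nilpotent_of_surjective _ ((MonoidHom.fst G H).subgroupMap_surjective _)
  · intro _
    have : Group.IsNilpotent ((closure (Prod.fst '' s)).prod (⊤ : Subgroup H)) :=
      Group.nilpotent_of_mulEquiv (prodEquiv _ _).symm
    have hle : closure s ≤ (closure (Prod.fst '' s)).prod ⊤ :=
      (closure_le _).2 fun p hp => ⟨subset_closure ⟨p, hp, rfl⟩, trivial⟩
    exact Group.nilpotent_of_mulEquiv (subgroupOfEquivOfLe hle)

lemma isNilpotent_closure_pair_prod_iff (p q : G × H) :
    Group.IsNilpotent (closure {p, q}) ↔ Group.IsNilpotent (closure {p.1, q.1}) := by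
  rw [isNilpotent_closure_prod_iff, Set.image_pair]

lemma mem_nilpotentizer_prod_iff (p : G × H) :
    p ∈ nilpotentizer (G × H) ↔ p.1 ∈ nilpotentizer G := by
  simp only [nilpotentizer, Set.mem_ofPred_eq, isNilpotent_closure_pair_prod_iff]
  exact ⟨fun h g => h (g, 1), fun h q => h q.1⟩

lemma nilpotentGraph_prod_reachable_of_fst_eq {v w : {x : G × H // x ∉ nilpotentizer (G × H)}}
    (h : v.1.1 = w.1.1) : (nilpotentGraph (G × H)).Reachable v w := by
  rcases eq_or_ne v w with rfl | hne
  · rfl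
  · refine Adj.reachable ⟨hne, ?_⟩
    rw [isNilpotent_closure_pair_prod_iff, h, Set.pair_eq_singleton, ← zpowers_eq_closure]
    open scoped IsMulCommutative in infer_instance

lemma image_val_supp_nilpotentGraph_prod (C : (nilpotentGraph (G × H)).ConnectedComponent) :
    Subtype.val '' C.supp = (Prod.fst '' (Subtype.val '' C.supp)) ×ˢ Set.univ := by
  ext ⟨g, h⟩
  refine ⟨fun hp => ⟨⟨(g, h), hp, rfl⟩, trivial⟩, ?_⟩
  rintro ⟨⟨_, ⟨v, hv, rfl⟩, rfl⟩, -⟩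
  have hvertex : (v.1.1, h) ∉ nilpotentizer (G × H) := by
    rw [mem_nilpotentizer_prod_iff]
    exact (mem_nilpotentizer_prod_iff v.1).not.1 v.2
  refine ⟨⟨_, hvertex⟩, ?_, rfl⟩
  rw [ConnectedComponent.mem_supp_iff] at hv ⊢
  rw [← hv]
  exact ConnectedComponent.sound (nilpotentGraph_prod_reachable_of_fst_eq rfl)

end

theorem card_dvd_component_card_prod_nilpotent_general {G H : Type*} [Group G] [Group H]
    (hH : Group.IsNilpotent H)
    (C : (nilpotentGraph (G × H)).ConnectedComponent) :
    Nat.card H ∣ C.supp.ncard := by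
  have := hH
  rw [← Set.ncard_image_of_injective _ Subtype.val_injective,
    image_val_supp_nilpotentGraph_prod C, Set.ncard_prod, Set.ncard_univ]
  exact dvd_mul_left _ _

theorem card_dvd_component_card_prod_nilpotent {G H : Type*} [Group G] [Group H]
    [Finite G] [Finite H] (hG : ¬ Group.IsNilpotent G) (hH : Group.IsNilpotent H)
    (C : (nilpotentGraph (G × H)).ConnectedComponent) :
    Nat.card H ∣ C.supp.ncard :=
  card_dvd_component_card_prod_nilpotent_general hH C
end

section
/- No finite non-nilpotent group has a self-complementary nilpotent graph: for any finite non-nilpotent group G there is no bijection f of G \ Z*(G) to itself such that for all distinct x, y, ⟨x,y⟩ is nilpotent if and only if ⟨f(x),f(y)⟩ is not nilpotent. -/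
/-!
A finite group all of whose two-generated subgroups are nilpotent has normal Sylow subgroups,
so some pair `a, b` generates a non-nilpotent subgroup. Inversion maps vertices to vertices,
and `x`, `x⁻¹` are adjacent twins because `⟨x⁻¹, y⟩ = ⟨x, y⟩`. Hence a complementing
bijection `f` sends each vertex `x ≠ x⁻¹` to an involution, and `u = f x`, `v = f x⁻¹` are
involutions generating a non-nilpotent group (if all vertices are involutions, take `u = a`,
`v = b` instead). As `u` inverts `uv`, the dihedral group `⟨u, uv⟩` is nilpotent exactly when
`uv` is a `2`-element, so the odd part `c` of `uv` is a vertex, of odd order `m`.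

Repeating this with `x = c` and pulling the adjacent twins `q = uv`, `q⁻¹` back along `f`
gives an involution `z` adjacent to `c` and a vertex `z'` not adjacent to `z` but with the
same other neighbours. Having odd order, `c` commutes with `z`, so `t = z c` is adjacent to
`z`, while `t ^ m = z` puts the non-nilpotent `⟨z', z⟩` inside `⟨z', t⟩`.
-/

open Subgroup
open scoped commutatorElement

theorem conj_pow_eq_pow_mul {G : Type*} [Group G] {a b w : G} (haw : Commute a w)
    (h : a * b * a⁻¹ = w * b) (j : ℕ) : a ^ j * b * (a ^ j)⁻¹ = w ^ j * b := by
  induction j with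
  | zero => simp
  | succ j ih =>
    calc a ^ (j + 1) * b * (a ^ (j + 1))⁻¹ = a * (a ^ j * b * (a ^ j)⁻¹) * a⁻¹ := by group
      _ = w ^ j * (a * b * a⁻¹) := by rw [ih, ← mul_assoc, (haw.pow_right j).eq]; group
      _ = w ^ (j + 1) * b := by rw [h]; group

theorem Commute.of_isNilpotent_of_coprime {G : Type*} [Group G] [Group.IsNilpotent G] {m n : ℕ}
    (hmn : m.Coprime n) {a b : G} (ha : a ^ m = 1) (hb : b ^ n = 1) : Commute a b := by
  refine Group.nilpotent_center_quotient_ind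
    (P := fun G _ _ => ∀ a b : G, a ^ m = 1 → b ^ n = 1 → Commute a b) G ?_ ?_ a b ha hb
  · intro G _ _ a b _ _
    exact Subsingleton.elim _ _
  · intro G _ _ ih a b ha hb
    -- by induction `⁅a, b⁆` is central, and conjugating `b` by `a ^ m` shows `⁅a, b⁆ ^ m = 1`
    have hw : ⁅a, b⁆ ∈ center G := by
      rw [← QuotientGroup.eq_one_iff, commutatorElement_def]
      have := ih a b (by simp [← QuotientGroup.mk_pow, ha])
        (by simp [← QuotientGroup.mk_pow, hb])
      simp [this.eq]
    have hwm : ⁅a, b⁆ ^ m = 1 := by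
      have := conj_pow_eq_pow_mul (mem_center_iff.mp hw a) (b := b)
        (by rw [commutatorElement_def]; group) m
      rwa [ha, one_mul, inv_one, mul_one, right_eq_mul] at this
    have hwn : ⁅a, b⁆⁻¹ ^ n = 1 := by
      have := conj_pow_eq_pow_mul (mem_center_iff.mp (inv_mem hw) b) (b := a)
        (by rw [commutatorElement_def]; group) n
      rwa [hb, one_mul, inv_one, mul_one, right_eq_mul] at this
    rw [inv_pow, inv_eq_one] at hwn
    rw [← commutatorElement_eq_one_iff_commute, ← pow_one ⁅a, b⁆, ← hmn.gcd_eq_one]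
    exact pow_gcd_eq_one.mpr ⟨hwm, hwn⟩

section ClosurePair

variable {G : Type*} [Group G]

theorem Subgroup.closure_pair_le_iff {a b : G} {K : Subgroup G} :
    closure {a, b} ≤ K ↔ a ∈ K ∧ b ∈ K := by
  simp [closure_le, Set.insert_subset_iff]

theorem Subgroup.closure_pair_inv_left (a b : G) : closure {a⁻¹, b} = closure {a, b} := by
  refine le_antisymm ?_ ?_ <;> refine closure_pair_le_iff.mpr ⟨?_, subset_closure (by simp)⟩
  · exact inv_mem (subset_closure (by simp))
  · simpa using inv_mem (subset_closure (by simp) : a⁻¹ ∈ closure {a⁻¹, b})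

theorem Subgroup.closure_pair_mul_right (a b : G) : closure {a, a * b} = closure {a, b} := by
  refine le_antisymm ?_ ?_ <;> refine closure_pair_le_iff.mpr ⟨subset_closure (by simp), ?_⟩
  · exact mul_mem (subset_closure (by simp)) (subset_closure (by simp))
  · simpa using mul_mem (inv_mem (subset_closure (by simp) : a ∈ closure {a, a * b}))
      (subset_closure (by simp) : a * b ∈ closure {a, a * b})

theorem Subgroup.isNilpotent_of_le {H K : Subgroup G} (hHK : H ≤ K) [Group.IsNilpotent K] :
    Group.IsNilpotent H :=
  Group.nilpotent_of_mulEquiv (subgroupOfEquivOfLe hHK)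

theorem Commute.isNilpotent_closure_pair {a b : G} (h : Commute a b) :
    Group.IsNilpotent (closure {a, b}) := by
  have : IsMulCommutative (closure {a, b}) := isMulCommutative_closure (by
    simp only [Set.mem_insert_iff, Set.mem_singleton_iff]
    rintro x (rfl | rfl) y (rfl | rfl) <;> first | rfl | exact h.eq | exact h.eq.symm)
  exact ⟨1, upperCentralSeries_one_eq_top_iff.mpr this⟩

theorem Commute.of_isNilpotent_closure_pair {a b : G} (h : Group.IsNilpotent (closure {a, b}))
    {m n : ℕ} (hmn : m.Coprime n) (ha : a ^ m = 1) (hb : b ^ n = 1) : Commute a b :=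
  congrArg Subtype.val <| Commute.of_isNilpotent_of_coprime (G := closure {a, b}) hmn
    (a := ⟨a, subset_closure (by simp)⟩) (b := ⟨b, subset_closure (by simp)⟩)
    (Subtype.ext (by simpa using ha)) (Subtype.ext (by simpa using hb))

end ClosurePair

section TwoElements

variable {G : Type*} [Group G]

theorem IsPGroup.zpowers_of_pow_eq_one {p k : ℕ} {g : G} (h : g ^ p ^ k = 1) :
    IsPGroup p (zpowers g) := by
  rintro ⟨_, j, rfl⟩
  refine ⟨k, Subtype.ext ?_⟩
  simp only [SubgroupClass.coe_pow, OneMemClass.coe_one]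
  rw [← zpow_natCast, ← zpow_mul, mul_comm, zpow_mul, zpow_natCast, h, one_zpow]

theorem exists_odd_pow_two_pow_pow_eq_one [Finite G] (g : G) :
    ∃ k m : ℕ, Odd m ∧ (g ^ 2 ^ k) ^ m = 1 := by
  obtain ⟨k, m, hm, hkm⟩ := Nat.exists_eq_two_pow_mul_odd (orderOf_pos g).ne'
  exact ⟨k, m, hm, by rw [← pow_mul, ← hkm, pow_orderOf_eq_one]⟩

theorem eq_one_of_pow_odd_eq_one_of_sq_eq_one {g : G} {m : ℕ} (hm : Odd m) (hgm : g ^ m = 1)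
    (hg : g ^ 2 = 1) : g = 1 := by
  rw [← pow_one g, ← (Nat.coprime_two_left.mpr hm).gcd_eq_one]
  exact pow_gcd_eq_one.mpr ⟨hg, hgm⟩

theorem conj_mul_eq_inv_of_sq_eq_one {u v : G} (hu : u ^ 2 = 1) (hv : v ^ 2 = 1) :
    u * (u * v) * u⁻¹ = (u * v)⁻¹ := by
  have hu' : u⁻¹ = u := inv_eq_of_mul_eq_one_right (by rw [← sq, hu])
  have hv' : v⁻¹ = v := inv_eq_of_mul_eq_one_right (by rw [← sq, hv])
  rw [mul_inv_rev, hu', hv', ← mul_assoc, ← sq, hu, one_mul]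

theorem isNilpotent_closure_pair_iff_of_conj_eq_inv [Finite G] {z c : G} (hz : z ^ 2 = 1)
    (hzc : z * c * z⁻¹ = c⁻¹) :
    Group.IsNilpotent (closure {z, c}) ↔ ∃ k, c ^ 2 ^ k = 1 := by
  constructor
  · intro hnil
    obtain ⟨k, m, hm, hcm⟩ := exists_odd_pow_two_pow_pow_eq_one c
    refine ⟨k, eq_one_of_pow_odd_eq_one_of_sq_eq_one hm hcm ?_⟩
    have hcomm : Commute z (c ^ 2 ^ k) := .of_isNilpotent_closure_pair
      (isNilpotent_of_le (K := closure {z, c}) (closure_pair_le_iff.mpr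
        ⟨subset_closure (by simp), pow_mem (subset_closure (by simp)) _⟩))
      (Nat.coprime_two_left.mpr hm) hz hcm
    have hinv : z * c ^ 2 ^ k * z⁻¹ = (c ^ 2 ^ k)⁻¹ := by rw [← conj_pow, hzc, inv_pow]
    rw [hcomm.eq, mul_inv_cancel_right, eq_inv_iff_mul_eq_one, ← sq] at hinv
    exact hinv
  · intro ⟨k, hc⟩
    have hp : IsPGroup 2 (closure {z, c}) := by
      rw [Set.insert_eq, Subgroup.closure_union, ← zpowers_eq_closure, ← zpowers_eq_closure]
      refine (IsPGroup.zpowers_of_pow_eq_one (k := 1) hz).to_sup_of_normal_right'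
        (IsPGroup.zpowers_of_pow_eq_one hc) (zpowers_le.mpr (mem_normalizer_fintype ?_))
      rintro _ ⟨j, rfl⟩
      refine ⟨-j, ?_⟩
      simp only [← conj_zpow, hzc, inv_zpow, zpow_neg]
    exact hp.isNilpotent

theorem not_isNilpotent_closure_pair_mul {z z' c : G} {m : ℕ} (hz : z ^ 2 = 1) (hm : Odd m)
    (hc : c ^ m = 1) (hzc : Commute z c) (h : ¬ Group.IsNilpotent (closure {z', z})) :
    ¬ Group.IsNilpotent (closure {z', z * c}) := by
  have hpow : (z * c) ^ m = z := by
    obtain ⟨k, rfl⟩ := hm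
    rw [hzc.mul_pow, hc, mul_one, pow_succ, pow_mul, hz, one_pow, one_mul]
  have hz : z ∈ closure {z', z * c} := by
    simpa only [hpow] using pow_mem (subset_closure (by simp) : z * c ∈ closure {z', z * c}) m
  exact fun hn => h (isNilpotent_of_le (closure_pair_le_iff.mpr ⟨subset_closure (by simp), hz⟩))

end TwoElements

section PairwiseNilpotent

variable {G : Type*} [Group G] [Finite G]

theorem exists_pow_prime_pow_mul_eq_one {p : ℕ} [Fact p.Prime] {x y : G}
    (hxy : Group.IsNilpotent (closure {x, y})) {i j : ℕ} (hx : x ^ p ^ i = 1)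
    (hy : y ^ p ^ j = 1) : ∃ l, (x * y) ^ p ^ l = 1 := by
  let P : Sylow p (closure {x, y}) := default
  have hle {g : closure {x, y}} {k : ℕ} (hg : g ^ p ^ k = 1) : g ∈ P :=
    sup_eq_right.mp (P.is_maximal' ((IsPGroup.zpowers_of_pow_eq_one hg).to_sup_of_normal_right
      P.isPGroup') le_sup_right) (mem_zpowers g)
  obtain ⟨l, hl⟩ := P.isPGroup' ⟨_, mul_mem
    (hle (g := ⟨x, subset_closure (by simp)⟩) (Subtype.ext (by simpa using hx)))
    (hle (g := ⟨y, subset_closure (by simp)⟩) (Subtype.ext (by simpa using hy)))⟩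
  exact ⟨l, by simpa using congrArg (Subtype.val ∘ Subtype.val) hl⟩

theorem isNilpotent_of_forall_isNilpotent_closure_pair
    (h : ∀ a b : G, Group.IsNilpotent (closure {a, b})) : Group.IsNilpotent G := by
  refine (Group.isNilpotent_of_finite_tfae.out 0 3).mpr ?_
  intro p _ P
  let N : Subgroup G :=
    { carrier := {g | ∃ i, g ^ p ^ i = 1}
      one_mem' := ⟨0, one_pow _⟩
      mul_mem' := fun ⟨_, hi⟩ ⟨_, hj⟩ => exists_pow_prime_pow_mul_eq_one (h _ _) hi hj
      inv_mem' := fun ⟨i, hi⟩ => ⟨i, by rw [inv_pow, hi, inv_one]⟩ }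
  have hN : IsPGroup p N := fun g => g.2.imp fun _ hi => Subtype.ext (by simpa using hi)
  have hPN : (P : Subgroup G) ≤ N := fun g hg =>
    (P.isPGroup' ⟨g, hg⟩).imp fun _ hi => by simpa using congrArg Subtype.val hi
  rw [← P.is_maximal' hN hPN]
  exact ⟨fun g ⟨i, hi⟩ k => ⟨i, by rw [conj_pow, hi, mul_one, mul_inv_cancel]⟩⟩

end PairwiseNilpotent

section Complementing

variable {V : Type*} {R : V → V → Prop} {f : V ≃ V}

def IsComplementing (R : V → V → Prop) (f : V ≃ V) : Prop :=
  ∀ x y, x ≠ y → (R x y ↔ ¬ R (f x) (f y))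

theorem IsComplementing.symm (hf : IsComplementing R f) : IsComplementing R f.symm := by
  intro x y hxy
  have := hf (f.symm x) (f.symm y) (f.symm.injective.ne hxy)
  rw [f.apply_symm_apply, f.apply_symm_apply] at this
  exact iff_not_comm.mp this

theorem IsComplementing.apply_eq_of_twin [Std.Symm R] (hf : IsComplementing R f)
    {ι : V → V} (hadj : ∀ x, R x (ι x)) (htwin : ∀ x y, R (ι x) y ↔ R x y) {x : V}
    (hx : ι x ≠ x) : ι (f x) = f x := by
  by_contra hy
  have h1 : ¬ R (f x) (f (ι x)) := (hf x (ι x) hx.symm).mp (hadj x)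
  have hne : f (ι x) ≠ ι (f x) := fun e => h1 (e ▸ hadj (f x))
  set w := f.symm (ι (f x))
  have hfw : f w = ι (f x) := f.apply_symm_apply _
  have hwx : w ≠ x := fun e => hy (by rw [← hfw, e])
  have hwιx : w ≠ ι x := fun e => hne (by rw [← e, hfw])
  have h2 : ¬ R (ι x) w := by
    rw [htwin]
    exact fun h => (hf x w hwx.symm).mp h (hfw ▸ hadj (f x))
  have h3 : R (f (ι x)) (ι (f x)) := by
    by_contra h
    exact h2 ((hf (ι x) w hwιx.symm).mpr (hfw ▸ h))
  exact h1 ((htwin _ _).mp (Std.Symm.symm _ _ h3))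

theorem IsComplementing.iff_of_twin (hf : IsComplementing R f) {x x' t : V}
    (htwin : ∀ y, R (f x) y ↔ R (f x') y) (hx : t ≠ x) (hx' : t ≠ x') : R x t ↔ R x' t :=
  (hf x t hx.symm).trans ((htwin _).not.trans (hf x' t hx'.symm).symm)

end Complementing

section NilpotentPair

variable {G : Type*} [Group G]

theorem one_mem_nilpotentizer : (1 : G) ∈ nilpotentizer G :=
  fun g => (Commute.one_left g).isNilpotent_closure_pair

theorem inv_mem_nilpotentizer_iff {g : G} : g⁻¹ ∈ nilpotentizer G ↔ g ∈ nilpotentizer G :=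
  forall_congr' fun h => by rw [closure_pair_inv_left]

theorem notMem_nilpotentizer_left {a b : G} (h : ¬ Group.IsNilpotent (closure {a, b})) :
    a ∉ nilpotentizer G :=
  fun ha => h (ha b)

theorem notMem_nilpotentizer_right {a b : G} (h : ¬ Group.IsNilpotent (closure {a, b})) :
    b ∉ nilpotentizer G :=
  notMem_nilpotentizer_left (by rwa [Set.pair_comm])

/-- The adjacency of `nilpotentGraph G`, made reflexive. -/
def nilpotentPair (x y : {g : G // g ∉ nilpotentizer G}) : Prop :=
  Group.IsNilpotent (closure {(x : G), (y : G)})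

instance : Std.Symm (nilpotentPair (G := G)) :=
  ⟨fun x y h => by rwa [nilpotentPair, Set.pair_comm]⟩

theorem nilpotentPair_refl (x : {g : G // g ∉ nilpotentizer G}) : nilpotentPair x x :=
  (Commute.refl _).isNilpotent_closure_pair

def vertexInv (x : {g : G // g ∉ nilpotentizer G}) : {g : G // g ∉ nilpotentizer G} :=
  ⟨(x : G)⁻¹, inv_mem_nilpotentizer_iff.not.mpr x.2⟩

theorem vertexInv_vertexInv (x : {g : G // g ∉ nilpotentizer G}) :
    vertexInv (vertexInv x) = x :=
  Subtype.ext (inv_inv _)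

theorem nilpotentPair_vertexInv_right (x : {g : G // g ∉ nilpotentizer G}) :
    nilpotentPair x (vertexInv x) :=
  (Commute.refl _).inv_right.isNilpotent_closure_pair

theorem nilpotentPair_vertexInv_left (x y : {g : G // g ∉ nilpotentizer G}) :
    nilpotentPair (vertexInv x) y ↔ nilpotentPair x y := by
  rw [nilpotentPair, nilpotentPair, vertexInv, closure_pair_inv_left]

theorem vertexInv_eq_iff {x : {g : G // g ∉ nilpotentizer G}} :
    vertexInv x = x ↔ (x : G) ^ 2 = 1 := by
  rw [vertexInv, Subtype.ext_iff, inv_eq_iff_mul_eq_one, sq]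

variable {f : {g : G // g ∉ nilpotentizer G} ≃ {g : G // g ∉ nilpotentizer G}}

theorem IsComplementing.exists_conj_eq_inv (hf : IsComplementing nilpotentPair f)
    {x : {g : G // g ∉ nilpotentizer G}} (hx : vertexInv x ≠ x) :
    (f x : G) ^ 2 = 1 ∧ ∃ q : {g : G // g ∉ nilpotentizer G},
      (f x : G) * q * (f x : G)⁻¹ = (q : G)⁻¹ ∧ ¬ nilpotentPair (f x) q := by
  have hinv {y} (hy : vertexInv y ≠ y) : (f y : G) ^ 2 = 1 := vertexInv_eq_iff.mp
    (hf.apply_eq_of_twin nilpotentPair_vertexInv_right nilpotentPair_vertexInv_left hy)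
  have hu := hinv hx
  have hv := hinv (y := vertexInv x) (by rwa [vertexInv_vertexInv, ne_comm])
  have huv : ¬ nilpotentPair (f x) (f (vertexInv x)) :=
    (hf _ _ hx.symm).mp (nilpotentPair_vertexInv_right x)
  rw [nilpotentPair, ← closure_pair_mul_right] at huv
  refine ⟨hu, ⟨_, notMem_nilpotentizer_right huv⟩, ?_, huv⟩
  exact conj_mul_eq_inv_of_sq_eq_one hu hv

theorem exists_odd_pow_eq_one_notMem_nilpotentizer_of_conj_eq_inv [Finite G] {u q : G}
    (hu : u ^ 2 = 1) (huq : u * q * u⁻¹ = q⁻¹) (hn : ¬ Group.IsNilpotent (closure {u, q})) :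
    ∃ c : G, ∃ m : ℕ, Odd m ∧ c ^ m = 1 ∧ c ∉ nilpotentizer G := by
  have hq := (isNilpotent_closure_pair_iff_of_conj_eq_inv hu huq).not.mp hn
  obtain ⟨k, m, hm, hkm⟩ := exists_odd_pow_two_pow_pow_eq_one q
  refine ⟨q ^ 2 ^ k, m, hm, hkm, notMem_nilpotentizer_right (a := u) ?_⟩
  rw [isNilpotent_closure_pair_iff_of_conj_eq_inv hu (by rw [← conj_pow, huq, inv_pow])]
  rintro ⟨j, hj⟩
  exact hq ⟨k + j, by rwa [pow_add, pow_mul]⟩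

theorem IsComplementing.exists_odd_pow_eq_one_notMem_nilpotentizer [Finite G]
    (hG : ¬ Group.IsNilpotent G) (hf : IsComplementing nilpotentPair f) :
    ∃ c : G, ∃ m : ℕ, Odd m ∧ c ^ m = 1 ∧ c ∉ nilpotentizer G := by
  obtain ⟨u, q, hu, huq, hn⟩ : ∃ u q : G,
      u ^ 2 = 1 ∧ u * q * u⁻¹ = q⁻¹ ∧ ¬ Group.IsNilpotent (closure {u, q}) := by
    obtain ⟨a, b, hab⟩ : ∃ a b : G, ¬ Group.IsNilpotent (closure {a, b}) := by
      by_contra! h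
      exact hG (isNilpotent_of_forall_isNilpotent_closure_pair h)
    by_cases hx : ∃ x : {g : G // g ∉ nilpotentizer G}, vertexInv x ≠ x
    · obtain ⟨x, hx⟩ := hx
      obtain ⟨hu, q, huq, hn⟩ := hf.exists_conj_eq_inv hx
      exact ⟨_, _, hu, huq, hn⟩
    · push Not at hx
      have ha := vertexInv_eq_iff.mp (hx ⟨a, notMem_nilpotentizer_left hab⟩)
      have hb := vertexInv_eq_iff.mp (hx ⟨b, notMem_nilpotentizer_right hab⟩)
      exact ⟨a, a * b, ha, conj_mul_eq_inv_of_sq_eq_one ha hb, by rwa [closure_pair_mul_right]⟩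
  exact exists_odd_pow_eq_one_notMem_nilpotentizer_of_conj_eq_inv hu huq hn

theorem IsComplementing.exists_twin_involution (hf : IsComplementing nilpotentPair f)
    {x : {g : G // g ∉ nilpotentizer G}} (hx : vertexInv x ≠ x) :
    ∃ z z' : {g : G // g ∉ nilpotentizer G}, (z : G) ^ 2 = 1 ∧ nilpotentPair x z ∧
      ¬ nilpotentPair z' z ∧
      ∀ t, t ≠ z → t ≠ z' → (nilpotentPair z t ↔ nilpotentPair z' t) := by
  obtain ⟨-, q, huq, hxq⟩ := hf.exists_conj_eq_inv hx
  have hq : vertexInv q ≠ q := fun h => hxq (Commute.isNilpotent_closure_pair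
    (mul_inv_eq_iff_eq_mul.mp (huq.trans (congrArg Subtype.val h))))
  have hxz : x ≠ f.symm q := fun h => hxq <| by
    rw [h, f.apply_symm_apply]
    exact nilpotentPair_refl q
  refine ⟨f.symm q, f.symm (vertexInv q), ?_, (hf _ _ hxz).mpr (by rwa [f.apply_symm_apply]), ?_,
    fun t ht ht' => hf.iff_of_twin ?_ ht ht'⟩
  · exact vertexInv_eq_iff.mp
      (hf.symm.apply_eq_of_twin nilpotentPair_vertexInv_right nilpotentPair_vertexInv_left hq)
  · exact (hf.symm _ _ hq).mp ((nilpotentPair_vertexInv_left q q).mpr (nilpotentPair_refl q))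
  · simp only [f.apply_symm_apply, nilpotentPair_vertexInv_left, implies_true]

end NilpotentPair

theorem nilpotentGraph_not_selfComplementary {G : Type*} [Group G] [Finite G]
    (hG : ¬ Group.IsNilpotent G) :
    ¬ ∃ f : {x : G // x ∉ nilpotentizer G} ≃ {x : G // x ∉ nilpotentizer G},
        ∀ x y : {x : G // x ∉ nilpotentizer G}, x ≠ y →
          (Group.IsNilpotent (Subgroup.closure ({(x : G), (y : G)} : Set G)) ↔
            ¬ Group.IsNilpotent (Subgroup.closure ({(f x : G), (f y : G)} : Set G))) := by
  rintro ⟨f, hf⟩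
  replace hf : IsComplementing nilpotentPair f := hf
  obtain ⟨c, m, hm, hcm, hc⟩ := hf.exists_odd_pow_eq_one_notMem_nilpotentizer hG
  let x : {g : G // g ∉ nilpotentizer G} := ⟨c, hc⟩
  have hx : vertexInv x ≠ x := fun h => hc <|
    eq_one_of_pow_odd_eq_one_of_sq_eq_one hm hcm (vertexInv_eq_iff.mp h) ▸ one_mem_nilpotentizer
  obtain ⟨z, z', hz, hxz, hz'z, htwin⟩ := hf.exists_twin_involution hx
  have hzc : Commute (z : G) c :=
    (Commute.of_isNilpotent_closure_pair hxz (Nat.coprime_two_right.mpr hm) hcm hz).symm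
  have hz'c := not_isNilpotent_closure_pair_mul hz hm hcm hzc hz'z
  let t : {g : G // g ∉ nilpotentizer G} := ⟨z * c, notMem_nilpotentizer_right hz'c⟩
  have htz : t ≠ z := fun h =>
    hc (mul_eq_left.mp (congrArg Subtype.val h) ▸ one_mem_nilpotentizer)
  have htz' : t ≠ z' := fun h => hz'c (by simpa [t] using h ▸ nilpotentPair_refl t)
  refine hz'c ((htwin t htz htz').mp ?_)
  rw [nilpotentPair, closure_pair_mul_right]
  exact hzc.isNilpotent_closure_pair
end
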